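/- Let φ_β = (1−z)^{β/2}/(1−z̄)^{β/2} on D (so φ_β = f_β/|f_β| for f_β = c_β(1−z)^β). For every even nonnegative integer 2n, φ_{2n} lies in (A¹)^⊥ + C(D̄). -/

import Mathlib

open MeasureTheory Metric Complex Filter
open scoped ENNReal Topology

/-- The normalized area measure `dA = (1/π) · (Lebesgue measure restricted to the unit disc)`. -/
noncomputable def dA : Measure ℂ :=
  (ENNReal.ofReal (1 / Real.pi)) • (volume.restrict (ball (0 : ℂ) 1))

/-- Membership in the Bergman space `A¹`: holomorphic on the unit disc and area-integrable. -/
def MemA1 (f : ℂ → ℂ) : Prop :=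
  DifferentiableOn ℂ f (ball (0 : ℂ) 1) ∧ Integrable f dA

/-- The Bergman norm `‖f‖ = ∫_D |f| dA`. -/
noncomputable def bergNorm (f : ℂ → ℂ) : ℝ := ∫ z, ‖f z‖ ∂dA

/-- `L` is (the restriction to `A¹` of) a linear functional. -/
def IsA1Functional (L : (ℂ → ℂ) → ℂ) : Prop :=
  (∀ f g, MemA1 f → MemA1 g → L (fun z => f z + g z) = L f + L g) ∧
  (∀ (c : ℂ) (f), MemA1 f → L (fun z => c * f z) = c * L f)

/-- `f` is a strongly exposed point of the closed unit ball of `A¹`: `f ∈ A¹`, `‖f‖ = 1`, and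
there is a linear functional `L` of norm one with `L f = 1` such that any sequence in the closed
unit ball of `A¹` on which `L` tends to `1` converges to `f` in the Bergman norm. -/
def StronglyExposed (f : ℂ → ℂ) : Prop :=
  MemA1 f ∧ bergNorm f = 1 ∧
  ∃ L : (ℂ → ℂ) → ℂ, IsA1Functional L ∧ L f = 1 ∧
    (∀ g, MemA1 g → ‖L g‖ ≤ bergNorm g) ∧
    (∀ fn : ℕ → ℂ → ℂ, (∀ n, MemA1 (fn n) ∧ bergNorm (fn n) ≤ 1) →
      Tendsto (fun n => L (fn n)) atTop (𝓝 1) →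
      Tendsto (fun n => bergNorm (fun z => fn n z - f z)) atTop (𝓝 0))

/-- Membership in `(A¹)^⊥`, the annihilator of the Bergman space inside `L^∞(D)`. -/
def InAnnA1 (ψ : ℂ → ℂ) : Prop :=
  MemLp ψ ⊤ dA ∧ ∀ f, MemA1 f → ∫ z, f z * (starRingEnd ℂ) (ψ z) ∂dA = 0

/-- Membership in `(A¹)^⊥ + C(D̄)` as a subspace of `L^∞(D)`. -/
def InAnnPlusC (φ : ℂ → ℂ) : Prop :=
  ∃ g h : ℂ → ℂ, InAnnA1 g ∧ ContinuousOn h (closedBall (0 : ℂ) 1) ∧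
    ∀ᵐ z ∂dA, φ z = g z + h z

/-- The `L^∞`-distance of `φ` to the subspace `(A¹)^⊥ + C(D̄)`. -/
noncomputable def distAnnPlusC (φ : ℂ → ℂ) : ℝ≥0∞ :=
  ⨅ (ψ : ℂ → ℂ) (_ : InAnnPlusC ψ), eLpNorm (fun z => φ z - ψ z) ⊤ dA

/-- The Bergman projection `Pψ(z) = ∫_D ψ(w)/(1 - z w̄)² dA(w)`. -/
noncomputable def bergP (ψ : ℂ → ℂ) (z : ℂ) : ℂ :=
  ∫ w, ψ w / (1 - z * (starRingEnd ℂ) w) ^ 2 ∂dA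

/-! Bézout in `ℂ[X]` gives `a, b` with `a (1 - z)ⁿ + b zⁿ⁺¹ = 1`. Split `φ = g + h` with
`h = (1 - z)ⁿ · conj (a z)`, continuous on `D̄`. Then `conj g = (1 - z̄)ⁿ zⁿ⁺¹ b(z) / (1 - z)ⁿ`, and on
the circle `|z| = ρ < 1`, where `z z̄ = ρ²`, this is `z (z - ρ²)ⁿ b(z) / (1 - z)ⁿ`: holomorphic on the
disc and zero at `0`. Hence for `f ∈ A¹` every circle average of `f · conj g` vanishes by the mean
value property, and integrating in polar coordinates gives `∫ f ḡ dA = 0`. -/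

open Set Polynomial ComplexConjugate
open scoped Real

section

variable {E : Type*} [NormedAddCommGroup E] [NormedSpace ℝ E]

theorem Complex.integrableOn_comp_polarCoord_symm_iff (F : ℂ → E) :
    IntegrableOn (fun p : ℝ × ℝ => p.1 • F (Complex.polarCoord.symm p)) polarCoord.target ↔
      Integrable F := by
  rw [← (Complex.volume_preserving_equiv_real_prod.symm).integrable_comp_emb
    measurableEquivRealProd.symm.measurableEmbedding, ← integrableOn_univ,
    ← integrableOn_congr_set_ae polarCoord_source_ae_eq_univ,
    ← polarCoord.symm_image_target_eq_source,
    integrableOn_image_iff_integrableOn_abs_det_fderiv_smul volume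
      polarCoord.open_target.measurableSet
      (fun p _ ↦ (hasFDerivAt_polarCoord_symm p).hasFDerivWithinAt) polarCoord.symm.injOn]
  refine integrableOn_congr_fun (fun p hp ↦ ?_) polarCoord.open_target.measurableSet
  rw [det_fderivPolarCoordSymm, abs_of_pos (show 0 < p.1 from hp.1)]
  rfl

theorem Complex.integral_Ioo_polarCoord_symm_eq_circleAverage (F : ℂ → E) (ρ : ℝ) :
    ∫ θ in Ioo (-π) π, F (Complex.polarCoord.symm (ρ, θ)) =
      (2 * π) • Real.circleAverage F 0 ρ := by
  have hcircle : ∀ θ : ℝ, Complex.polarCoord.symm (ρ, θ) = circleMap 0 ρ θ := fun θ ↦ by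
    rw [circleMap_zero, Complex.polarCoord_symm_apply, exp_mul_I, ← ofReal_cos, ← ofReal_sin]
  simp_rw [hcircle, Real.circleAverage_def, smul_smul,
    mul_inv_cancel₀ (by positivity : (2 * π) ≠ 0), one_smul]
  calc ∫ θ in Ioo (-π) π, F (circleMap 0 ρ θ)
      = ∫ θ in (-π)..(-π + 2 * π), F (circleMap 0 ρ θ) := by
        rw [intervalIntegral.integral_of_le (by linarith [Real.pi_pos]),
          integral_Ioc_eq_integral_Ioo]
        ring_nf
    _ = ∫ θ in 0..2 * π, F (circleMap 0 ρ θ) := by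
        have hper : Function.Periodic (fun θ ↦ F (circleMap 0 ρ θ)) (2 * π) := fun θ ↦ by
          simp [periodic_circleMap 0 ρ θ]
        rw [hper.intervalIntegral_add_eq (-π) 0, zero_add]

theorem setIntegral_ball_eq_integral_circleAverage {F : ℂ → E} {R : ℝ}
    (hF : IntegrableOn F (ball 0 R)) :
    ∫ z in ball 0 R, F z = ∫ ρ in Ioo 0 R, (2 * π * ρ) • Real.circleAverage F 0 ρ := by
  have hmeas : MeasurableSet (Complex.polarCoord.symm ⁻¹' ball 0 R) :=
    measurableSet_ball.preimage <| by
      simp_rw [funext Complex.polarCoord_symm_apply]; fun_prop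
  have hpolar : Complex.polarCoord.symm ⁻¹' ball 0 R ∩ polarCoord.target =
      Ioo 0 R ×ˢ Ioo (-π) π := by
    ext ⟨ρ, θ⟩
    simp only [polarCoord_target, mem_inter_iff, mem_preimage, mem_ball_zero_iff,
      Complex.norm_polarCoord_symm, mem_prod, mem_Ioi, mem_Ioo]
    constructor
    · rintro ⟨h, hρ, hθ⟩
      exact ⟨⟨hρ, by rwa [abs_of_pos hρ] at h⟩, hθ⟩
    · rintro ⟨⟨hρ, h⟩, hθ⟩
      exact ⟨by rwa [abs_of_pos hρ], hρ, hθ⟩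
  have hind : (fun p : ℝ × ℝ ↦ p.1 • (ball 0 R).indicator F (Complex.polarCoord.symm p)) =
      (Complex.polarCoord.symm ⁻¹' ball 0 R).indicator
        (fun p ↦ p.1 • F (Complex.polarCoord.symm p)) := by
    ext p
    rw [indicator_smul_apply, ← indicator_comp_right]
    rfl
  have hint : IntegrableOn (fun p : ℝ × ℝ ↦ p.1 • F (Complex.polarCoord.symm p))
      (Ioo 0 R ×ˢ Ioo (-π) π) := by
    have := (Complex.integrableOn_comp_polarCoord_symm_iff _).2
      ((integrable_indicator_iff measurableSet_ball).2 hF)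
    rwa [hind, integrableOn_indicator_iff hmeas, hpolar] at this
  rw [Measure.volume_eq_prod] at hint
  calc ∫ z in ball 0 R, F z
      = ∫ p in polarCoord.target, p.1 • (ball 0 R).indicator F (Complex.polarCoord.symm p) := by
        rw [Complex.integral_comp_polarCoord_symm, integral_indicator measurableSet_ball]
    _ = ∫ p in Ioo 0 R ×ˢ Ioo (-π) π, p.1 • F (Complex.polarCoord.symm p) := by
        rw [hind, setIntegral_indicator hmeas, inter_comm, hpolar]
    _ = ∫ ρ in Ioo 0 R, ρ • ∫ θ in Ioo (-π) π, F (Complex.polarCoord.symm (ρ, θ)) := by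
        rw [Measure.volume_eq_prod, setIntegral_prod _ hint]
        simp_rw [integral_smul]
    _ = ∫ ρ in Ioo 0 R, (2 * π * ρ) • Real.circleAverage F 0 ρ := by
        simp_rw [Complex.integral_Ioo_polarCoord_symm_eq_circleAverage, smul_smul, mul_comm]

end

theorem ae_dA_mem_ball : ∀ᵐ z ∂dA, z ∈ ball (0 : ℂ) 1 :=
  Measure.ae_smul_measure (ae_restrict_mem measurableSet_ball) _

theorem integrable_dA_iff {E : Type*} [NormedAddCommGroup E] {F : ℂ → E} :
    Integrable F dA ↔ IntegrableOn F (ball 0 1) :=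
  integrable_smul_measure (by simp [Real.pi_pos]) ENNReal.ofReal_ne_top

theorem integral_dA {E : Type*} [NormedAddCommGroup E] [NormedSpace ℝ E] (F : ℂ → E) :
    ∫ z, F z ∂dA = π⁻¹ • ∫ z in ball 0 1, F z := by
  rw [dA, integral_smul_measure, ENNReal.toReal_ofReal (by positivity), one_div]

theorem memLp_top_dA_of_continuousOn {E : Type*} [NormedAddCommGroup E] {h : ℂ → E}
    (hh : ContinuousOn h (closedBall 0 1)) :
    MemLp h ⊤ dA := by
  obtain ⟨M, hM⟩ := (isCompact_closedBall (0 : ℂ) 1).exists_bound_of_continuousOn hh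
  refine memLp_top_of_bound ?_ M ?_
  · exact ((hh.mono ball_subset_closedBall).aestronglyMeasurable measurableSet_ball).smul_measure _
  · filter_upwards [ae_dA_mem_ball] with z hz using hM z (ball_subset_closedBall hz)

theorem norm_div_conj_pow_le_one (z : ℂ) (n : ℕ) : ‖((1 - z) / (1 - conj z)) ^ n‖ ≤ 1 := by
  have : ‖1 - conj z‖ = ‖1 - z‖ := by
    rw [show 1 - conj z = conj (1 - z) by simp, norm_conj]
  rw [norm_pow, norm_div, this]
  exact pow_le_one₀ (by positivity) (div_self_le_one _)

theorem memLp_top_dA_div_conj_pow (n : ℕ) :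
    MemLp (fun z => ((1 - z) / (1 - conj z)) ^ n) ⊤ dA :=
  memLp_top_of_bound (Measurable.aestronglyMeasurable (by fun_prop)) 1
    (ae_of_all _ fun z => norm_div_conj_pow_le_one z n)

theorem inAnnA1_of_circleAverage_eq_zero {g : ℂ → ℂ} (hg : MemLp g ⊤ dA)
    (h : ∀ f, MemA1 f → ∀ ρ ∈ Ioo (0 : ℝ) 1,
      Real.circleAverage (fun z => f z * conj (g z)) 0 ρ = 0) :
    InAnnA1 g := by
  refine ⟨hg, fun f hf => ?_⟩
  have hint : IntegrableOn (fun z => f z * conj (g z)) (ball 0 1) :=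
    integrable_dA_iff.1 (hf.2.mul_of_top_left hg.star)
  rw [integral_dA, setIntegral_ball_eq_integral_circleAverage hint,
    setIntegral_congr_fun measurableSet_Ioo fun ρ hρ => by rw [h f hf ρ hρ, smul_zero],
    integral_zero, smul_zero]

theorem conj_div_conj_pow_sub_eq {a b : ℂ[X]} {n : ℕ}
    (hab : a * (1 - X) ^ n + b * X ^ (n + 1) = 1) {z : ℂ} (hz : z ≠ 1) :
    conj (((1 - z) / (1 - conj z)) ^ n - (1 - z) ^ n * conj (a.eval z)) =
      z * (z - z * conj z) ^ n * b.eval z / (1 - z) ^ n := by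
  have hev : a.eval z * (1 - z) ^ n + b.eval z * z ^ (n + 1) = 1 := by
    simpa using congrArg (eval z) hab
  have h1 : 1 - z ≠ 0 := sub_ne_zero.2 hz.symm
  simp only [map_sub, map_mul, map_pow, map_div₀, map_one, conj_conj]
  rw [div_pow, eq_div_iff (pow_ne_zero n h1), sub_mul, div_mul_cancel₀ _ (pow_ne_zero n h1),
    show z - z * conj z = z * (1 - conj z) by ring, mul_pow]
  linear_combination -(1 - conj z) ^ n * hev

theorem circleAverage_mul_conj_div_conj_pow_sub_eq_zero {a b : ℂ[X]} {n : ℕ}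
    (hab : a * (1 - X) ^ n + b * X ^ (n + 1) = 1) {f : ℂ → ℂ}
    (hf : DifferentiableOn ℂ f (ball 0 1)) {ρ : ℝ} (hρ : ρ ∈ Ioo (0 : ℝ) 1) :
    Real.circleAverage (fun z => f z *
      conj (((1 - z) / (1 - conj z)) ^ n - (1 - z) ^ n * conj (a.eval z))) 0 ρ = 0 := by
  have hsub : closedBall (0 : ℂ) |ρ| ⊆ ball 0 1 :=
    closedBall_subset_ball (by rw [abs_of_pos hρ.1]; exact hρ.2)
  have hne : ∀ z ∈ ball (0 : ℂ) 1, 1 - z ≠ 0 := by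
    rintro z hz h
    rw [← eq_of_sub_eq_zero h] at hz
    simp at hz
  set H : ℂ → ℂ := fun z => f z * (z * (z - ρ ^ 2) ^ n * b.eval z / (1 - z) ^ n)
  have hH : DifferentiableOn ℂ H (ball 0 1) :=
    hf.mul <| DifferentiableOn.div (by fun_prop) (by fun_prop) fun z hz =>
      pow_ne_zero n (hne z hz)
  have hEq : EqOn (fun z => f z *
      conj (((1 - z) / (1 - conj z)) ^ n - (1 - z) ^ n * conj (a.eval z))) H (sphere 0 |ρ|) := by
    intro z hz
    have hz1 : z ≠ 1 := fun h => hne z (hsub (sphere_subset_closedBall hz)) (by rw [h, sub_self])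
    have hnorm : z * conj z = (ρ : ℂ) ^ 2 := by
      rw [mul_conj', mem_sphere_zero_iff_norm.1 hz, abs_of_pos hρ.1]
    simp only [H, conj_div_conj_pow_sub_eq hab hz1, hnorm]
  rw [Real.circleAverage_congr_sphere hEq, (hH.diffContOnCl_ball hsub).circleAverage]
  simp [H]

theorem phi_even_mem_annPlusC (n : ℕ) :
    InAnnPlusC (fun z => ((1 - z) / (1 - (starRingEnd ℂ) z)) ^ n) := by
  obtain ⟨a, b, hab⟩ :=
    (show IsCoprime (1 - X : ℂ[X]) X from ⟨1, 1, by ring⟩).pow (m := n) (n := n + 1)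
  set h : ℂ → ℂ := fun z => (1 - z) ^ n * conj (a.eval z)
  have hcont : Continuous h := by fun_prop
  refine ⟨fun z => ((1 - z) / (1 - conj z)) ^ n - h z, h, ?_, hcont.continuousOn,
    ae_of_all _ fun z => (sub_add_cancel _ _).symm⟩
  exact inAnnA1_of_circleAverage_eq_zero
    ((memLp_top_dA_div_conj_pow n).sub (memLp_top_dA_of_continuousOn hcont.continuousOn))
    fun f hf ρ hρ => circleAverage_mul_conj_div_conj_pow_sub_eq_zero hab hf.1 hρ
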